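/- (Symmetric Lovász Local Lemma) Let A_1,...,A_n be events in a probability space such that each A_i is mutually independent of all but at most k of the other events, and Pr[A_i] ≤ p for all i. If e·p·(k+1) ≤ 1, then Pr[⋂_i complement(A_i)] > 0. -/

import Mathlib

/-!
Put `x = 1/(k+2)`; since `(1 + 1/(k+1))^(k+1) ≤ e`, the hypothesis gives `Pr[A_i] ≤ x (1-x)^k`.
Writing `C_S = ⋂_{j ∈ S} A_jᶜ`, one shows by strong induction on `S` that
`Pr[A_i ∩ C_S] ≤ x Pr[C_S]` whenever `i ∉ S`. Split `S` into the part `S₁` of which `A_i` is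
independent and the remaining part `S₂`, of size at most `k`. Then
`Pr[A_i ∩ C_S] ≤ Pr[A_i] Pr[C_{S₁}] ≤ x (1-x)^k Pr[C_{S₁}]`, while adding the events of `S₂` to
`S₁` one at a time and using the induction hypothesis at each step gives
`Pr[C_S] ≥ (1-x)^{|S₂|} Pr[C_{S₁}]`. The same peeling applied to all `n` events gives
`Pr[C_univ] ≥ (1-x)^n > 0`.
-/

open MeasureTheory ProbabilityTheory Finset

section

variable {Ω ι : Type*} [MeasurableSpace Ω] {μ : Measure Ω} {A : ι → Set Ω}

lemma measureReal_inter_biInter_compl_eq_mul_of_indep {s : Set Ω} {J : Set ι}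
    (h : Indep (MeasurableSpace.generateFrom {s}) (MeasurableSpace.generateFrom (A '' J)) μ)
    {T : Finset ι} (hT : (T : Set ι) ⊆ J) :
    μ.real (s ∩ ⋂ j ∈ T, (A j)ᶜ) = μ.real s * μ.real (⋂ j ∈ T, (A j)ᶜ) := by
  have hs : MeasurableSet[MeasurableSpace.generateFrom {s}] s :=
    MeasurableSpace.measurableSet_generateFrom rfl
  have hT' : MeasurableSet[MeasurableSpace.generateFrom (A '' J)] (⋂ j ∈ T, (A j)ᶜ) :=
    T.measurableSet_biInter fun j hj =>
      (MeasurableSpace.measurableSet_generateFrom (Set.mem_image_of_mem A (hT hj))).compl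
  simp only [Measure.real, (Indep_iff _ _ _).1 h _ _ hs hT', ENNReal.toReal_mul]

variable [IsFiniteMeasure μ] [DecidableEq ι]

lemma one_sub_mul_le_measureReal_biInter_compl_insert {i : ι} (hAi : MeasurableSet (A i))
    {S : Finset ι} {x : ℝ}
    (h : μ.real (A i ∩ ⋂ j ∈ S, (A j)ᶜ) ≤ x * μ.real (⋂ j ∈ S, (A j)ᶜ)) :
    (1 - x) * μ.real (⋂ j ∈ S, (A j)ᶜ) ≤ μ.real (⋂ j ∈ insert i S, (A j)ᶜ) := by
  have hsplit := measureReal_inter_add_sdiff (μ := μ) (s := ⋂ j ∈ S, (A j)ᶜ) hAi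
  rw [set_biInter_insert, Set.inter_comm, ← Set.sdiff_eq]
  rw [Set.inter_comm] at hsplit
  linarith

lemma one_sub_pow_mul_le_measureReal_biInter_compl_union (hA : ∀ i, MeasurableSet (A i))
    {x : ℝ} (hx : x ≤ 1) {U T : Finset ι} (hUT : Disjoint U T)
    (h : ∀ V j, j ∉ V → insert j V ⊆ U ∪ T →
      μ.real (A j ∩ ⋂ i ∈ V, (A i)ᶜ) ≤ x * μ.real (⋂ i ∈ V, (A i)ᶜ)) :
    (1 - x) ^ #T * μ.real (⋂ i ∈ U, (A i)ᶜ) ≤ μ.real (⋂ i ∈ U ∪ T, (A i)ᶜ) := by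
  induction T using Finset.induction_on with
  | empty => simp
  | insert j T hjT ih =>
    have hjU : j ∉ U := disjoint_right.1 hUT (mem_insert_self j T)
    have hj : j ∉ U ∪ T := by simp [hjU, hjT]
    have hx' : 0 ≤ 1 - x := sub_nonneg.2 hx
    have ih' := ih (hUT.mono_right (subset_insert j T)) fun V i hi hV =>
      h V i hi (hV.trans (union_subset_union_right (subset_insert j T)))
    rw [card_insert_of_notMem hjT, union_insert]
    calc (1 - x) ^ (#T + 1) * μ.real (⋂ i ∈ U, (A i)ᶜ)
        = (1 - x) * ((1 - x) ^ #T * μ.real (⋂ i ∈ U, (A i)ᶜ)) := by ring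
      _ ≤ (1 - x) * μ.real (⋂ i ∈ U ∪ T, (A i)ᶜ) := by gcongr
      _ ≤ μ.real (⋂ i ∈ insert j (U ∪ T), (A i)ᶜ) :=
        one_sub_mul_le_measureReal_biInter_compl_insert (hA j)
          (h _ j hj (by rw [union_insert]))

lemma measureReal_inter_biInter_compl_le_mul [Fintype ι] (hA : ∀ i, MeasurableSet (A i))
    {J : ι → Finset ι} {k : ℕ} (hk : ∀ i, #(univ \ insert i (J i)) ≤ k)
    (hind : ∀ i, ∀ T ⊆ J i,
      μ.real (A i ∩ ⋂ j ∈ T, (A j)ᶜ) = μ.real (A i) * μ.real (⋂ j ∈ T, (A j)ᶜ))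
    {x : ℝ} (hx0 : 0 ≤ x) (hx1 : x ≤ 1) (hp : ∀ i, μ.real (A i) ≤ x * (1 - x) ^ k)
    (S : Finset ι) {i : ι} (hi : i ∉ S) :
    μ.real (A i ∩ ⋂ j ∈ S, (A j)ᶜ) ≤ x * μ.real (⋂ j ∈ S, (A j)ᶜ) := by
  induction S using Finset.strongInduction generalizing i with
  | H S ih =>
    set S₁ := S ∩ J i
    set S₂ := S \ J i
    have hS : S₁ ∪ S₂ = S := by rw [union_comm]; exact sdiff_union_inter S (J i)
    have hS₂ : #S₂ ≤ k := by
      refine (card_le_card fun j hj => ?_).trans (hk i)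
      have hjS := mem_sdiff.1 hj
      simp only [mem_sdiff, mem_univ, mem_insert, true_and, not_or]
      exact ⟨fun hji => hi (hji ▸ hjS.1), hjS.2⟩
    have hpeel : (1 - x) ^ #S₂ * μ.real (⋂ j ∈ S₁, (A j)ᶜ) ≤ μ.real (⋂ j ∈ S, (A j)ᶜ) := by
      rw [← hS]
      exact one_sub_pow_mul_le_measureReal_biInter_compl_union hA hx1
        (disjoint_sdiff_inter S (J i)).symm
        fun V j hjV hV => ih V ((ssubset_insert hjV).trans_subset (hS ▸ hV)) hjV
    calc μ.real (A i ∩ ⋂ j ∈ S, (A j)ᶜ)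
        ≤ μ.real (A i ∩ ⋂ j ∈ S₁, (A j)ᶜ) :=
          measureReal_mono (Set.inter_subset_inter_right _
            (Set.biInter_subset_biInter_left (coe_subset.2 inter_subset_left)))
      _ = μ.real (A i) * μ.real (⋂ j ∈ S₁, (A j)ᶜ) := hind i S₁ inter_subset_right
      _ ≤ x * (1 - x) ^ #S₂ * μ.real (⋂ j ∈ S₁, (A j)ᶜ) := by
          gcongr
          exact (hp i).trans (mul_le_mul_of_nonneg_left
            (pow_le_pow_of_le_one (sub_nonneg.2 hx1) (by linarith) hS₂) hx0)
      _ ≤ x * μ.real (⋂ j ∈ S, (A j)ᶜ) := by rw [mul_assoc]; gcongr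

end

lemma le_inv_mul_one_sub_inv_pow_of_exp_mul_le {p : ℝ} {k : ℕ}
    (h : Real.exp 1 * p * (k + 1) ≤ 1) :
    p ≤ (k + 2 : ℝ)⁻¹ * (1 - (k + 2 : ℝ)⁻¹) ^ k := by
  set m : ℝ := k + 1
  have hm : 0 < m := by positivity
  have he : (1 + m⁻¹) ^ (k + 1) ≤ Real.exp 1 := by
    simpa [m] using Real.one_add_inv_pow_le_exp (n := k + 1)
  have hsub : 1 - (m + 1)⁻¹ = m / (m + 1) := by field_simp; ring
  have hid : (m + 1)⁻¹ * (1 - (m + 1)⁻¹) ^ k * (1 + m⁻¹) ^ (k + 1) * m = 1 := by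
    rw [hsub, show 1 + m⁻¹ = (m + 1) / m by field_simp, div_pow, div_pow]
    field_simp
    ring
  have hq : 0 ≤ (m + 1)⁻¹ * (1 - (m + 1)⁻¹) ^ k := by rw [hsub]; positivity
  rw [show (k + 2 : ℝ) = m + 1 by ring]
  refine le_of_mul_le_mul_right ?_ (by positivity : 0 < Real.exp 1 * m)
  calc p * (Real.exp 1 * m) ≤ 1 := by linarith
    _ = (m + 1)⁻¹ * (1 - (m + 1)⁻¹) ^ k * (1 + m⁻¹) ^ (k + 1) * m := hid.symm
    _ ≤ (m + 1)⁻¹ * (1 - (m + 1)⁻¹) ^ k * (Real.exp 1 * m) := by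
      rw [← mul_assoc]; gcongr

theorem stmt_4_general {Ω : Type*} [MeasurableSpace Ω] (μ : Measure Ω) [IsProbabilityMeasure μ]
    (n : ℕ) (A : Fin n → Set Ω) (hA : ∀ i, MeasurableSet (A i))
    (k : ℕ) (p : ℝ)
    (J : Fin n → Finset (Fin n))
    (hk : ∀ i, (Finset.univ \ insert i (J i)).card ≤ k)
    (hindep : ∀ i, Indep (MeasurableSpace.generateFrom {A i})
      (MeasurableSpace.generateFrom (A '' (J i : Set (Fin n)))) μ)
    (hp : ∀ i, (μ (A i)).toReal ≤ p)
    (h : Real.exp 1 * p * (k + 1) ≤ 1) :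
    0 < μ (⋂ i, (A i)ᶜ) := by
  set x : ℝ := (k + 2 : ℝ)⁻¹
  have hx0 : 0 ≤ x := by positivity
  have hx1 : x < 1 := inv_lt_one_of_one_lt₀ (by linarith [(k.cast_nonneg : (0 : ℝ) ≤ k)])
  have hcond : ∀ V j, j ∉ V →
      μ.real (A j ∩ ⋂ i ∈ V, (A i)ᶜ) ≤ x * μ.real (⋂ i ∈ V, (A i)ᶜ) :=
    fun V j hj => measureReal_inter_biInter_compl_le_mul hA hk
      (fun i T hT => measureReal_inter_biInter_compl_eq_mul_of_indep (hindep i) (coe_subset.2 hT))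
      hx0 hx1.le (fun i => (hp i).trans (le_inv_mul_one_sub_inv_pow_of_exp_mul_le h)) V hj
  have hbound := one_sub_pow_mul_le_measureReal_biInter_compl_union (μ := μ) hA hx1.le
    (disjoint_empty_left univ) fun V j hj _ => hcond V j hj
  simp only [card_univ, Fintype.card_fin, empty_union, mem_univ, Set.iInter_true,
    notMem_empty, Set.iInter_false, Set.iInter_univ, probReal_univ, mul_one] at hbound
  exact (ENNReal.toReal_pos_iff.1 ((pow_pos (sub_pos.2 hx1) n).trans_le hbound)).1

theorem stmt_4 {Ω : Type*} [MeasurableSpace Ω] (μ : Measure Ω) [IsProbabilityMeasure μ]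
    (n : ℕ) (A : Fin n → Set Ω) (hA : ∀ i, MeasurableSet (A i))
    (k : ℕ) (p : ℝ)
    (J : Fin n → Finset (Fin n)) (hJi : ∀ i, i ∉ J i)
    (hk : ∀ i, (Finset.univ \ insert i (J i)).card ≤ k)
    (hindep : ∀ i, Indep (MeasurableSpace.generateFrom {A i})
      (MeasurableSpace.generateFrom (A '' (J i : Set (Fin n)))) μ)
    (hp : ∀ i, (μ (A i)).toReal ≤ p)
    (h : Real.exp 1 * p * (k + 1) ≤ 1) :
    0 < μ (⋂ i, (A i)ᶜ) :=
  stmt_4_general μ n A hA k p J hk hindep hp h
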